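/- Variance bound for iterate-averaged 3DVAR in the simultaneously diagonalized case: under the diagonal setup, fix γ > 0 and let τ_v ∈ [0,1] satisfy τ_v < (t(1+2ε) + 2ε)/(1 + 2ε + 2p). Then there exists a constant C > 0 such that for every n ≥ 1 and the given α, the variance term V_n(α) = (γ²/n²) Σ_{j=1}^{n} Σ_{i=1}^∞ σ_i^{t+2} a_i² q_{j,α}(σ_i a_i²)² satisfies V_n(α) ≤ C (γ²/α)(n/α)^{−τ_v}. -/

import Mathlib

open Finset

/-- `q_{n,α}(λ) = λ⁻¹ (1 − (α/(α+λ))^n)`. -/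
noncomputable def qFun (n : ℕ) (α l : ℝ) : ℝ := l⁻¹ * (1 - (α / (α + l)) ^ n)

/-- Squared bias of iterate-averaged 3DVAR in the diagonal case (sequences are 1-based):
`B_n(α) = (α/n)² Σ_{i≥1} σ_i^t q_{n,α}(σ_i a_i²)² v_{0,i}²`. -/
noncomputable def Bterm (σ a v0 : ℕ → ℝ) (t : ℝ) (α : ℝ) (n : ℕ) : ℝ :=
  (α / (n : ℝ)) ^ 2 *
    ∑' i : ℕ, (σ (i + 1)) ^ t * (qFun n α (σ (i + 1) * (a (i + 1)) ^ 2)) ^ 2 * (v0 (i + 1)) ^ 2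

/-- Variance term of iterate-averaged 3DVAR in the diagonal case (sequences are 1-based):
`V_n(α) = (γ²/n²) Σ_{j=1}^n Σ_{i≥1} σ_i^{t+2} a_i² q_{j,α}(σ_i a_i²)²`. -/
noncomputable def Vterm (σ a : ℕ → ℝ) (t γ : ℝ) (α : ℝ) (n : ℕ) : ℝ :=
  (γ ^ 2 / (n : ℝ) ^ 2) *
    ∑ j ∈ Icc 1 n, ∑' i : ℕ,
      (σ (i + 1)) ^ (t + 2) * (a (i + 1)) ^ 2 * (qFun j α (σ (i + 1) * (a (i + 1)) ^ 2)) ^ 2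

/-!
Since `0 ≤ q_{j,α}(λ) ≤ min (j/α, λ⁻¹)`, interpolating with `s = 1 - τ_v` gives
`q_{j,α}(λ)² ≤ (j/α)^s λ^(s-2)`. With `λ = σ_i a_i²` the `(j, i)` summand of `V_n(α)` is then at
most `(j/α)^s σ_i^(t+s) a_i^(2s-2) ≲ (j/α)^s i^e` with
`e = -(1+2ε)(t+s) + 2p(1-s)`, and `e < -1` is exactly the condition on `τ_v`. Summing over
`j ≤ n` costs `n (n/α)^s`, and the prefactor `γ²/n²` turns this into `(γ²/α)(n/α)^(s-1)`.
-/

namespace Real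

lemma sq_le_rpow_mul_rpow_of_le_of_le {q A B s : ℝ} (hq : 0 ≤ q) (hA : q ≤ A) (hB : q ≤ B)
    (hs0 : 0 ≤ s) (hs2 : s ≤ 2) : q ^ 2 ≤ A ^ s * B ^ (2 - s) := by
  calc q ^ 2 = q ^ s * q ^ (2 - s) := by
        rw [← rpow_add' hq (by norm_num), add_sub_cancel, rpow_two]
    _ ≤ A ^ s * B ^ (2 - s) := by
        gcongr
        exact rpow_nonneg (hq.trans hA) s

lemma rpow_le_mul_rpow_of_le_mul_rpow {x c I u e : ℝ} (hx : 0 ≤ x) (hc : 0 ≤ c) (hI : 0 ≤ I)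
    (h : x ≤ c * I ^ u) (he : 0 ≤ e) : x ^ e ≤ c ^ e * I ^ (u * e) := by
  rw [rpow_mul hI, ← mul_rpow hc (rpow_nonneg hI u)]
  exact rpow_le_rpow hx h he

lemma rpow_le_mul_rpow_of_mul_rpow_le {y c I v e : ℝ} (hc : 0 < c) (hI : 0 < I)
    (h : c * I ^ v ≤ y) (he : e ≤ 0) : y ^ e ≤ c ^ e * I ^ (v * e) := by
  rw [rpow_mul hI.le, ← mul_rpow hc.le (rpow_nonneg hI.le v)]
  exact rpow_le_rpow_of_nonpos (by positivity) h he

end Real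

section qFun

variable {α l : ℝ}

lemma qFun_nonneg (n : ℕ) (hα : 0 ≤ α) (hl : 0 < l) : 0 ≤ qFun n α l := by
  have : (α / (α + l)) ^ n ≤ 1 :=
    pow_le_one₀ (by positivity) ((div_le_one (by positivity)).2 (by linarith))
  exact mul_nonneg (inv_nonneg.2 hl.le) (by linarith)

lemma qFun_le_inv (n : ℕ) (hα : 0 ≤ α) (hl : 0 < l) : qFun n α l ≤ l⁻¹ := by
  have : 0 ≤ (α / (α + l)) ^ n := by positivity
  exact mul_le_of_le_one_right (inv_nonneg.2 hl.le) (by linarith)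

lemma qFun_le_div (n : ℕ) (hα : 0 < α) (hl : 0 < l) : qFun n α l ≤ n / α := by
  have hαl : 0 < α + l := by linarith
  have h1x : 1 - α / (α + l) = l / (α + l) := by field_simp; ring
  have hx : 0 ≤ α / (α + l) := by positivity
  have hbern : 1 - (α / (α + l)) ^ n ≤ n * (l / (α + l)) := by
    have := one_add_mul_le_pow (a := α / (α + l) - 1) (by linarith) n
    rw [add_sub_cancel, ← neg_sub, h1x] at this
    linarith
  calc qFun n α l ≤ l⁻¹ * (n * (l / (α + l))) := mul_le_mul_of_nonneg_left hbern (by positivity)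
    _ = n / (α + l) := by field_simp
    _ ≤ n / α := by gcongr; linarith

lemma qFun_sq_le {s : ℝ} (n : ℕ) (hα : 0 < α) (hl : 0 < l) (hs0 : 0 ≤ s) (hs2 : s ≤ 2) :
    qFun n α l ^ 2 ≤ (n / α) ^ s * l ^ (s - 2) := by
  have := Real.sq_le_rpow_mul_rpow_of_le_of_le (qFun_nonneg n hα.le hl) (qFun_le_div n hα hl)
    (qFun_le_inv n hα.le hl) hs0 hs2
  rwa [Real.inv_rpow hl.le, ← Real.rpow_neg hl.le, neg_sub] at this

lemma rpow_mul_sq_mul_qFun_sq_le {x y s : ℝ} (n : ℕ) (t : ℝ) (hα : 0 < α) (hx : 0 < x)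
    (hy : 0 < y) (hs0 : 0 ≤ s) (hs2 : s ≤ 2) :
    x ^ (t + 2) * y ^ 2 * qFun n α (x * y ^ 2) ^ 2 ≤
      (n / α) ^ s * (x ^ (t + s) * y ^ (2 * s - 2)) := by
  have hxy : x ^ (t + 2) * y ^ 2 * (x * y ^ 2) ^ (s - 2) = x ^ (t + s) * y ^ (2 * s - 2) := by
    rw [Real.mul_rpow hx.le (by positivity), ← Real.rpow_two y, ← Real.rpow_mul hy.le,
      mul_mul_mul_comm, ← Real.rpow_add hx, ← Real.rpow_add hy]
    ring_nf
  calc x ^ (t + 2) * y ^ 2 * qFun n α (x * y ^ 2) ^ 2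
      ≤ x ^ (t + 2) * y ^ 2 * ((n / α) ^ s * (x * y ^ 2) ^ (s - 2)) := by
        gcongr
        exact qFun_sq_le n hα (by positivity) hs0 hs2
    _ = (n / α) ^ s * (x ^ (t + s) * y ^ (2 * s - 2)) := by rw [← hxy]; ring

end qFun

noncomputable def varianceSummand (σ a : ℕ → ℝ) (t α : ℝ) (j i : ℕ) : ℝ :=
  σ (i + 1) ^ (t + 2) * a (i + 1) ^ 2 * qFun j α (σ (i + 1) * a (i + 1) ^ 2) ^ 2

section PowerLaw

variable {σ a : ℕ → ℝ} {c₁ c₂ u v t α s : ℝ}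

lemma varianceSummand_le (hα : 0 < α) (hc₁ : 0 < c₁) (hc₂ : 0 ≤ c₂)
    (hσ : ∀ i : ℕ, 1 ≤ i → c₁ * (i : ℝ) ^ u ≤ σ i ∧ σ i ≤ c₂ * (i : ℝ) ^ u)
    (ha : ∀ i : ℕ, 1 ≤ i → c₁ * (i : ℝ) ^ v ≤ a i)
    (hs0 : 0 ≤ s) (hs1 : s ≤ 1) (hts : 0 ≤ t + s) (j i : ℕ) :
    varianceSummand σ a t α j i ≤ (j / α) ^ s *
      (c₂ ^ (t + s) * c₁ ^ (2 * s - 2) * ((i + 1 : ℕ) : ℝ) ^ (u * (t + s) + v * (2 * s - 2))) := by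
  have hI : (0 : ℝ) < (i + 1 : ℕ) := by positivity
  have hσ' := hσ (i + 1) (by omega)
  have hσpos : 0 < σ (i + 1) := lt_of_lt_of_le (by positivity) hσ'.1
  have hapos : 0 < a (i + 1) := lt_of_lt_of_le (by positivity) (ha (i + 1) (by omega))
  refine (rpow_mul_sq_mul_qFun_sq_le j t hα hσpos hapos hs0 (by linarith)).trans
    (mul_le_mul_of_nonneg_left ?_ (by positivity))
  rw [Real.rpow_add hI, mul_mul_mul_comm]
  exact mul_le_mul (Real.rpow_le_mul_rpow_of_le_mul_rpow hσpos.le hc₂ hI.le hσ'.2 hts)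
    (Real.rpow_le_mul_rpow_of_mul_rpow_le hc₁ hI (ha (i + 1) (by omega)) (by linarith))
    (by positivity) (by positivity)

lemma tsum_varianceSummand_le (hα : 0 < α) (hc₁ : 0 < c₁) (hc₂ : 0 ≤ c₂)
    (hσ : ∀ i : ℕ, 1 ≤ i → c₁ * (i : ℝ) ^ u ≤ σ i ∧ σ i ≤ c₂ * (i : ℝ) ^ u)
    (ha : ∀ i : ℕ, 1 ≤ i → c₁ * (i : ℝ) ^ v ≤ a i)
    (hs0 : 0 ≤ s) (hs1 : s ≤ 1) (hts : 0 ≤ t + s)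
    (hsum : Summable fun i : ℕ => ((i + 1 : ℕ) : ℝ) ^ (u * (t + s) + v * (2 * s - 2))) (j : ℕ) :
    ∑' i, varianceSummand σ a t α j i ≤ (j / α) ^ s * (c₂ ^ (t + s) * c₁ ^ (2 * s - 2) *
      ∑' i : ℕ, ((i + 1 : ℕ) : ℝ) ^ (u * (t + s) + v * (2 * s - 2))) := by
  have hle := varianceSummand_le hα hc₁ hc₂ hσ ha hs0 hs1 hts j
  have hnonneg (i : ℕ) : 0 ≤ varianceSummand σ a t α j i := by
    have : 0 ≤ σ (i + 1) := (lt_of_lt_of_le (by positivity) (hσ (i + 1) (by omega)).1).le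
    unfold varianceSummand
    positivity
  have hmajorant := (hsum.mul_left (c₂ ^ (t + s) * c₁ ^ (2 * s - 2))).mul_left ((j / α) ^ s)
  calc ∑' i, varianceSummand σ a t α j i
      ≤ ∑' i : ℕ, (j / α) ^ s * (c₂ ^ (t + s) * c₁ ^ (2 * s - 2) *
          ((i + 1 : ℕ) : ℝ) ^ (u * (t + s) + v * (2 * s - 2))) :=
        (hmajorant.of_nonneg_of_le hnonneg hle).tsum_le_tsum hle hmajorant
    _ = _ := by rw [tsum_mul_left, tsum_mul_left]

end PowerLaw

lemma Vterm_le_of_tsum_varianceSummand_le {σ a : ℕ → ℝ} {t γ α s D : ℝ} (hα : 0 < α)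
    (hs : 0 ≤ s) (hD : 0 ≤ D) (h : ∀ j : ℕ, ∑' i, varianceSummand σ a t α j i ≤ (j / α) ^ s * D)
    {n : ℕ} (hn : 1 ≤ n) : Vterm σ a t γ α n ≤ D * (γ ^ 2 / α) * ((n : ℝ) / α) ^ (s - 1) := by
  have hn0 : (0 : ℝ) < n := by exact_mod_cast hn
  calc Vterm σ a t γ α n
      = γ ^ 2 / (n : ℝ) ^ 2 * ∑ j ∈ Icc 1 n, ∑' i, varianceSummand σ a t α j i := rfl
    _ ≤ γ ^ 2 / (n : ℝ) ^ 2 * ∑ j ∈ Icc 1 n, ((n : ℝ) / α) ^ s * D := by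
        gcongr with j hj
        refine (h j).trans ?_
        gcongr
        exact_mod_cast (mem_Icc.1 hj).2
    _ = D * (γ ^ 2 / α) * ((n : ℝ) / α) ^ (s - 1) := by
        rw [sum_const, Nat.card_Icc, Real.rpow_sub_one (by positivity), nsmul_eq_mul,
          Nat.add_sub_cancel]
        field_simp

theorem diagonal_variance_bound_general
    (ε p α t γ : ℝ) (hε : 0 < ε) (hp : 0 < p) (hα : 0 < α) (ht : 0 ≤ t)
    (σ a : ℕ → ℝ) (c₁ c₂ : ℝ) (hc₁ : 0 < c₁) (hc₁₂ : c₁ ≤ c₂)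
    (hσ : ∀ i : ℕ, 1 ≤ i → c₁ * (i : ℝ) ^ (-1 - 2 * ε) ≤ σ i ∧ σ i ≤ c₂ * (i : ℝ) ^ (-1 - 2 * ε))
    (ha : ∀ i : ℕ, 1 ≤ i → c₁ * (i : ℝ) ^ (-p) ≤ a i ∧ a i ≤ c₂ * (i : ℝ) ^ (-p))
    (τv : ℝ) (hτv0 : 0 ≤ τv) (hτv1 : τv ≤ 1)
    (hτv : τv < (t * (1 + 2 * ε) + 2 * ε) / (1 + 2 * ε + 2 * p)) :
    ∃ C : ℝ, 0 < C ∧ ∀ n : ℕ, 1 ≤ n →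
      Vterm σ a t γ α n ≤ C * (γ ^ 2 / α) * ((n : ℝ) / α) ^ (-τv) := by
  set s := 1 - τv with hs
  set e := (-1 - 2 * ε) * (t + s) + (-p) * (2 * s - 2) with he
  have he1 : e < -1 := by
    have := (lt_div_iff₀ (by positivity)).1 hτv
    linarith
  have hsum : Summable fun i : ℕ => ((i + 1 : ℕ) : ℝ) ^ e :=
    (summable_nat_add_iff 1).2 (Real.summable_nat_rpow.2 he1)
  have hc₂ : 0 < c₂ := hc₁.trans_le hc₁₂
  have hD : 0 < c₂ ^ (t + s) * c₁ ^ (2 * s - 2) * ∑' i : ℕ, ((i + 1 : ℕ) : ℝ) ^ e :=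
    mul_pos (by positivity) (hsum.tsum_pos (fun _ => by positivity) 0 (by positivity))
  refine ⟨_, hD, fun n hn => ?_⟩
  have := Vterm_le_of_tsum_varianceSummand_le (γ := γ) hα (by linarith) hD.le
    (tsum_varianceSummand_le hα hc₁ hc₂.le hσ (fun i hi => (ha i hi).1) (by linarith)
      (by linarith) (by linarith) hsum) hn
  rwa [hs, sub_sub_cancel_left] at this

/-- Variance bound for iterate-averaged 3DVAR in the simultaneously diagonalized case:
if `τ_v ∈ [0,1]` and `τ_v < (t(1+2ε)+2ε)/(1+2ε+2p)`, then
`V_n(α) ≤ C (γ²/α)(n/α)^{−τ_v}`. -/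
theorem diagonal_variance_bound
    (ε p α t β γ : ℝ) (hε : 0 < ε) (hp : 0 < p) (hα : 0 < α) (ht : 0 ≤ t) (hβ : 0 ≤ β)
    (hγ : 0 < γ)
    (σ a : ℕ → ℝ) (c₁ c₂ : ℝ) (hc₁ : 0 < c₁) (hc₁₂ : c₁ ≤ c₂)
    (hσ : ∀ i : ℕ, 1 ≤ i → c₁ * (i : ℝ) ^ (-1 - 2 * ε) ≤ σ i ∧ σ i ≤ c₂ * (i : ℝ) ^ (-1 - 2 * ε))
    (ha : ∀ i : ℕ, 1 ≤ i → c₁ * (i : ℝ) ^ (-p) ≤ a i ∧ a i ≤ c₂ * (i : ℝ) ^ (-p))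
    (τv : ℝ) (hτv0 : 0 ≤ τv) (hτv1 : τv ≤ 1)
    (hτv : τv < (t * (1 + 2 * ε) + 2 * ε) / (1 + 2 * ε + 2 * p)) :
    ∃ C : ℝ, 0 < C ∧ ∀ n : ℕ, 1 ≤ n →
      Vterm σ a t γ α n ≤ C * (γ ^ 2 / α) * ((n : ℝ) / α) ^ (-τv) :=
  diagonal_variance_bound_general ε p α t γ hε hp hα ht σ a c₁ c₂ hc₁ hc₁₂ hσ ha τv hτv0 hτv1 hτv
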